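/- Let Φ be a free R-module and M = S*(Φ) its symmetric algebra, regarded as a commutative cocommutative Hopf algebra with Φ primitive. Let r : Φ⊗Φ → S be any linear map to a commutative R-algebra S. Then r extends to an S-valued bicharacter of M via the permanent formula: r(φ₁⋯φₘ ⊗ φ'₁⋯φ'ₙ) = 0 if m≠n, and Σ_{σ∈Sₘ} ∏ᵢ r(φᵢ⊗φ'_{σ(i)}) if m=n, for φᵢ, φ'ᵢ ∈ Φ. -/

import Mathlib

open TensorProduct MvPolynomial

/-- `ρ` is an `S`-valued bicharacter of the bialgebra `M`, with respect to the
coproduct `Δ` and counit `η`. -/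
def IsBicharacter (R M S : Type) [CommRing R] [CommRing M] [Algebra R M]
    [CommRing S] [Algebra R S]
    (Δ : M →ₗ[R] M ⊗[R] M) (η : M →ₗ[R] R) (ρ : M →ₗ[R] M →ₗ[R] S) : Prop :=
  (∀ a : M, ρ 1 a = algebraMap R S (η a)) ∧
  (∀ a : M, ρ a 1 = algebraMap R S (η a)) ∧
  (∀ (a b c : M) (ι : Type) (t : Finset ι) (c₁ c₂ : ι → M),
    Δ c = ∑ i ∈ t, c₁ i ⊗ₜ[R] c₂ i →
    ρ (a * b) c = ∑ i ∈ t, ρ a (c₁ i) * ρ b (c₂ i)) ∧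
  (∀ (a b c : M) (ι : Type) (t : Finset ι) (a₁ a₂ : ι → M),
    Δ a = ∑ i ∈ t, a₁ i ⊗ₜ[R] a₂ i →
    ρ a (b * c) = ∑ i ∈ t, ρ (a₁ i) b * ρ (a₂ i) c)

/-!
Left multiplicativity of a bicharacter says exactly that `a ↦ ρ a` is an algebra map from `M`
into the convolution algebra `Hom(M, S)`, which is commutative because `M` is cocommutative.
As `M` is free on `Φ`, we may send `φ ∈ Φ` to `r φ ∘ π`, where `π : M → Φ` is the projection
onto the degree-one part; `π` is a derivation at the counit, so it kills every product of
primitives except the single ones. Since `Δ (ψ₁ ⋯ ψₙ) = ∑_T ψ_T ⊗ ψ_{Tᶜ}`, expanding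
`ρ (φ₀ φ₁ ⋯ φₘ) (ψ₁ ⋯ ψₙ)` along `φ₀` is then the Laplace expansion of a permanent.
The permanent is invariant under transposition, so `ρ_r a c = ρ_{rᵀ} c a` on products of
elements of `Φ`, hence everywhere, and multiplicativity in the second argument follows from
that in the first.
-/

open Coalgebra WithConv

theorem Matrix.permanent_succ_column_zero {R : Type*} [CommSemiring R] {n : ℕ}
    (A : Matrix (Fin (n + 1)) (Fin (n + 1)) R) :
    A.permanent = ∑ i, A i 0 * (A.submatrix i.succAbove Fin.succ).permanent := by
  rw [Matrix.permanent, Finset.univ_perm_fin_succ, ← Finset.univ_product_univ]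
  simp only [Finset.sum_map, Equiv.toEmbedding_apply, Finset.sum_product, Matrix.permanent,
    Matrix.submatrix_apply, Finset.mul_sum, Fin.prod_univ_succ,
    Equiv.Perm.decomposeFin_symm_apply_zero, Equiv.Perm.decomposeFin_symm_apply_succ]
  refine Finset.sum_congr rfl fun i _ => Fin.cases ?_ (fun i => ?_) i
  · simp
  · rw [← Equiv.sum_comp (Equiv.mulLeft i.cycleRange)
      (fun σ => A i.succ 0 * ∏ x, A (i.succ.succAbove (σ x)) x.succ)]
    simp [Fin.succAbove_cycleRange]

theorem Fin.prod_univ_erase {M : Type*} [CommMonoid M] {n : ℕ} (f : Fin (n + 1) → M)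
    (j : Fin (n + 1)) : ∏ i ∈ Finset.univ.erase j, f i = ∏ i, f (j.succAbove i) := by
  rw [← Finset.compl_singleton, ← Fin.image_succAbove_univ,
    Finset.prod_image fun a _ b _ h => j.succAbove_right_injective h]

theorem Algebra.span_prod_eq_top_of_adjoin_range_eq_top {R A Φ : Type*} [CommSemiring R]
    [CommSemiring A] [Algebra R A] (f : Φ → A) (h : Algebra.adjoin R (Set.range f) = ⊤) :
    Submodule.span R {a | ∃ (m : ℕ) (φ : Fin m → Φ), ∏ i, f (φ i) = a} = ⊤ := by
  refine top_unique ?_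
  rw [← Algebra.top_toSubmodule (R := R), ← h, Algebra.adjoin_eq_span]
  refine Submodule.span_mono fun a ha => ?_
  induction ha using Submonoid.closure_induction with
  | mem a ha =>
    obtain ⟨φ, rfl⟩ := ha
    exact ⟨1, fun _ => φ, by simp⟩
  | one => exact ⟨0, Fin.elim0, by simp⟩
  | mul a b _ _ ha hb =>
    obtain ⟨m, φ, rfl⟩ := ha
    obtain ⟨k, ψ, rfl⟩ := hb
    exact ⟨m + k, Fin.append φ ψ, by simp [Fin.prod_univ_add]⟩

section Primitive
variable {R M : Type*} [CommSemiring R] [CommSemiring M] [Bialgebra R M]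

theorem comul_prod_of_primitive {β : Type*} [DecidableEq β] (x : β → M)
    (hx : ∀ b, comul (R := R) (x b) = x b ⊗ₜ 1 + 1 ⊗ₜ x b) (B : Finset β) :
    comul (R := R) (∏ b ∈ B, x b) = ∑ T ∈ B.powerset, (∏ b ∈ T, x b) ⊗ₜ (∏ b ∈ B \ T, x b) := by
  have hx' (b : β) : Bialgebra.comulAlgHom R M (x b) =
      Algebra.TensorProduct.includeLeft (S := R) (x b) + Algebra.TensorProduct.includeRight (x b) :=
    hx b
  rw [← Bialgebra.comulAlgHom_apply, map_prod]
  simp only [hx', Finset.prod_add, ← map_prod]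
  simp only [Algebra.TensorProduct.includeLeft_apply, Algebra.TensorProduct.includeRight_apply,
    Algebra.TensorProduct.tmul_mul_tmul, mul_one, one_mul]

theorem counit_prod_eq_zero {β : Type*} (x : β → M) (hx : ∀ b, counit (R := R) (x b) = 0)
    {B : Finset β} (hB : B.Nonempty) : counit (R := R) (∏ b ∈ B, x b) = 0 := by
  obtain ⟨j, hj⟩ := hB
  rw [← Bialgebra.counitAlgHom_apply, map_prod]
  exact Finset.prod_eq_zero hj (hx j)

theorem map_prod_eq_zero_of_card_ne_one {N : Type*} [AddCommGroup N] [Module R N]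
    (D : M →ₗ[R] N) (hD : ∀ a b, D (a * b) = counit (R := R) b • D a + counit (R := R) a • D b)
    {β : Type*} [DecidableEq β] (x : β → M) (hx : ∀ b, counit (R := R) (x b) = 0)
    {B : Finset β} (hB : B.card ≠ 1) : D (∏ b ∈ B, x b) = 0 := by
  obtain rfl | ⟨j, hj⟩ := B.eq_empty_or_nonempty
  · simpa [Bialgebra.counit_one] using hD 1 1
  · have hrest : (B.erase j).Nonempty := by
      rw [← Finset.card_pos, Finset.card_erase_of_mem hj]
      have := Finset.card_pos.mpr ⟨j, hj⟩
      omega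
    rw [← Finset.mul_prod_erase B x hj, hD, counit_prod_eq_zero x hx hrest, hx, zero_smul,
      zero_smul, add_zero]

end Primitive

section Convolution
variable {R M S Φ : Type*} [CommRing R] [CommRing M] [Bialgebra R M] [CommRing S] [Algebra R S]
  [AddCommGroup Φ] [Module R Φ]

noncomputable def convPairing (F : M →ₐ[R] WithConv (M →ₗ[R] S)) : M →ₗ[R] M →ₗ[R] S :=
  (WithConv.linearEquiv R (M →ₗ[R] S)).toLinearMap ∘ₗ F.toLinearMap

theorem convPairing_apply (F : M →ₐ[R] WithConv (M →ₗ[R] S)) (a c : M) :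
    convPairing F a c = F a c := rfl

variable (lin : Φ →ₗ[R] M) (π : M →ₗ[R] Φ) (r : Φ →ₗ[R] Φ →ₗ[R] S)
  (F : M →ₐ[R] WithConv (M →ₗ[R] S))
  (hprim : ∀ φ, comul (R := R) (lin φ) = lin φ ⊗ₜ 1 + 1 ⊗ₜ lin φ)
  (hε : ∀ φ, counit (R := R) (lin φ) = 0)
  (hπ : ∀ a b, π (a * b) = counit (R := R) b • π a + counit (R := R) a • π b)
  (hπlin : ∀ φ, π (lin φ) = φ)
  (hF : ∀ φ, F (lin φ) = toConv (r φ ∘ₗ π))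

include hprim hε hπ hπlin hF in
theorem algHom_lin_mul_apply_prod (φ : Φ) (P : M) {β : Type*} [DecidableEq β] (B : Finset β)
    (ψ : β → Φ) :
    F (lin φ * P) (∏ b ∈ B, lin (ψ b))
      = ∑ j ∈ B, r φ (ψ j) * F P (∏ b ∈ B.erase j, lin (ψ b)) := by
  let rep : Coalgebra.Repr R (∏ b ∈ B, lin (ψ b)) (Finset β) :=
    ⟨B.powerset, _, _, (comul_prod_of_primitive _ (fun b => hprim (ψ b)) B).symm⟩
  have hsub : B.powersetCard 1 ⊆ B.powerset := fun T hT =>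
    Finset.mem_powerset.mpr (Finset.mem_powersetCard.mp hT).1
  rw [map_mul, rep.convMul_apply, ← Finset.sum_subset hsub, Finset.powersetCard_one,
    Finset.sum_map]
  · simp [rep, hF, hπlin, Finset.sdiff_singleton_eq_erase]
  · intro T hTB hT
    have hcard : T.card ≠ 1 := fun h =>
      hT (Finset.mem_powersetCard.mpr ⟨Finset.mem_powerset.mp hTB, h⟩)
    simp [rep, hF, map_prod_eq_zero_of_card_ne_one π hπ _ (fun b => hε (ψ b)) hcard]

include hprim hε hπ hπlin hF in
theorem algHom_prod_apply_prod_eq_zero {m : ℕ} (φ : Fin m → Φ) {β : Type*} [DecidableEq β]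
    (B : Finset β) (ψ : β → Φ) (hm : m ≠ B.card) :
    F (∏ i, lin (φ i)) (∏ b ∈ B, lin (ψ b)) = 0 := by
  induction m generalizing B with
  | zero =>
    have hB : B.Nonempty := Finset.card_pos.mp (Nat.pos_of_ne_zero hm.symm)
    simp [counit_prod_eq_zero _ (fun b => hε (ψ b)) hB]
  | succ m ih =>
    rw [Fin.prod_univ_succ, algHom_lin_mul_apply_prod lin π r F hprim hε hπ hπlin hF]
    refine Finset.sum_eq_zero fun j hj => ?_
    have hB := Finset.card_pos.mpr ⟨j, hj⟩
    rw [ih _ _ (by rw [Finset.card_erase_of_mem hj]; omega), mul_zero]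

include hprim hε hπ hπlin hF in
theorem algHom_prod_apply_prod_eq_permanent {m : ℕ} (φ ψ : Fin m → Φ) :
    F (∏ i, lin (φ i)) (∏ i, lin (ψ i)) = (Matrix.of fun i j => r (φ j) (ψ i)).permanent := by
  induction m with
  | zero => simp [Matrix.permanent_isEmpty]
  | succ m ih =>
    rw [Fin.prod_univ_succ, algHom_lin_mul_apply_prod lin π r F hprim hε hπ hπlin hF,
      Matrix.permanent_succ_column_zero]
    refine Finset.sum_congr rfl fun j _ => ?_
    rw [Fin.prod_univ_erase, ih]
    rfl

include hprim hε hπ hπlin hF in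
theorem algHom_apply_eq_apply_flip (hgen : Algebra.adjoin R (Set.range lin) = ⊤)
    (G : M →ₐ[R] WithConv (M →ₗ[R] S)) (hG : ∀ φ, G (lin φ) = toConv (r.flip φ ∘ₗ π))
    (a c : M) : F a c = G c a := by
  have hspan := Algebra.span_prod_eq_top_of_adjoin_range_eq_top lin hgen
  suffices convPairing F = (convPairing G).flip from congr($this a c)
  refine LinearMap.ext_on hspan ?_
  rintro _ ⟨m, φ, rfl⟩
  refine LinearMap.ext_on hspan ?_
  rintro _ ⟨k, ψ, rfl⟩
  simp only [LinearMap.flip_apply, convPairing_apply]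
  obtain rfl | hmk := eq_or_ne m k
  · rw [algHom_prod_apply_prod_eq_permanent lin π r F hprim hε hπ hπlin hF,
      algHom_prod_apply_prod_eq_permanent lin π r.flip G hprim hε hπ hπlin hG,
      ← Matrix.permanent_transpose]
    rfl
  · rw [algHom_prod_apply_prod_eq_zero lin π r F hprim hε hπ hπlin hF φ Finset.univ ψ (by simpa),
      algHom_prod_apply_prod_eq_zero lin π r.flip G hprim hε hπ hπlin hG ψ Finset.univ φ
        (by simpa using hmk.symm)]

end Convolution

theorem isBicharacter_convPairing {R M S Φ : Type} [CommRing R] [CommRing M] [Bialgebra R M]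
    [CommRing S] [Algebra R S] [AddCommGroup Φ] [Module R Φ]
    (lin : Φ →ₗ[R] M) (π : M →ₗ[R] Φ) (r : Φ →ₗ[R] Φ →ₗ[R] S)
    (hprim : ∀ φ, comul (R := R) (lin φ) = lin φ ⊗ₜ 1 + 1 ⊗ₜ lin φ)
    (hε : ∀ φ, counit (R := R) (lin φ) = 0)
    (hπ : ∀ a b, π (a * b) = counit (R := R) b • π a + counit (R := R) a • π b)
    (hπlin : ∀ φ, π (lin φ) = φ) (hgen : Algebra.adjoin R (Set.range lin) = ⊤)
    (F G : M →ₐ[R] WithConv (M →ₗ[R] S)) (hF : ∀ φ, F (lin φ) = toConv (r φ ∘ₗ π))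
    (hG : ∀ φ, G (lin φ) = toConv (r.flip φ ∘ₗ π)) :
    IsBicharacter R M S comul counit (convPairing F) := by
  have hsymm := algHom_apply_eq_apply_flip lin π r F hprim hε hπ hπlin hF hgen G hG
  have hsymm' := algHom_apply_eq_apply_flip lin π r.flip G hprim hε hπ hπlin hG hgen F hF
  refine ⟨fun a => by simp [convPairing_apply], fun a => by simp [convPairing_apply, hsymm],
    fun a b c ι t c₁ c₂ hc => ?_, fun a b c ι t a₁ a₂ ha => ?_⟩
  · rw [convPairing_apply, map_mul]
    exact Coalgebra.Repr.convMul_apply (A := S) ⟨t, c₁, c₂, hc.symm⟩ _ _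
  · rw [convPairing_apply, hsymm, map_mul,
      Coalgebra.Repr.convMul_apply (A := S) ⟨t, a₁, a₂, ha.symm⟩]
    simp only [convPairing_apply, hsymm']

namespace MvPolynomial
variable {R ι Φ : Type*} [CommRing R] [AddCommGroup Φ] [Module R Φ]

section Bialgebra
variable {Δ : MvPolynomial ι R →ₐ[R] MvPolynomial ι R ⊗[R] MvPolynomial ι R}
  {η : MvPolynomial ι R →ₐ[R] R}

theorem coassoc_of_comul_X (hΔ : ∀ i, Δ (X i) = X i ⊗ₜ 1 + 1 ⊗ₜ X i) :
    (Algebra.TensorProduct.assoc R R R _ _ _).toAlgHom.comp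
      ((Algebra.TensorProduct.map Δ (.id R _)).comp Δ)
      = (Algebra.TensorProduct.map (.id R _) Δ).comp Δ := by
  ext i
  simp [hΔ, Algebra.TensorProduct.one_def, tmul_add, add_tmul]
  abel

theorem comm_comp_of_comul_X (hΔ : ∀ i, Δ (X i) = X i ⊗ₜ 1 + 1 ⊗ₜ X i) :
    (Algebra.TensorProduct.comm R _ _).toAlgHom.comp Δ = Δ := by
  ext i
  simp [hΔ, add_comm]

theorem map_counit_id_comp_of_comul_X (hΔ : ∀ i, Δ (X i) = X i ⊗ₜ 1 + 1 ⊗ₜ X i)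
    (hη : ∀ i, η (X i) = 0) :
    (Algebra.TensorProduct.map η (.id R _)).comp Δ
      = (Algebra.TensorProduct.lid R (MvPolynomial ι R)).symm := by
  ext i
  simp [hΔ, hη]

theorem map_id_counit_comp_of_comul_X (hΔ : ∀ i, Δ (X i) = X i ⊗ₜ 1 + 1 ⊗ₜ X i)
    (hη : ∀ i, η (X i) = 0) :
    (Algebra.TensorProduct.map (.id R _) η).comp Δ
      = (Algebra.TensorProduct.rid R R (MvPolynomial ι R)).symm := by
  ext i
  simp [hΔ, hη]

theorem algHom_apply_eq_constantCoeff (hη : ∀ i, η (X i) = 0) (p : MvPolynomial ι R) :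
    η p = constantCoeff p := by
  rw [show η = aeval 0 from algHom_ext (by simp [hη]), aeval_zero, Algebra.algebraMap_self,
    RingHom.id_apply]

end Bialgebra

noncomputable def linearCoeffs : MvPolynomial ι R →ₗ[R] ι →₀ R :=
  Finsupp.lcomapDomain (Finsupp.single · 1) (Finsupp.single_left_injective one_ne_zero) ∘ₗ
    (basisMonomials ι R).repr.toLinearMap

theorem linearCoeffs_apply (p : MvPolynomial ι R) (j : ι) :
    linearCoeffs p j = coeff (Finsupp.single j 1) p := rfl

theorem linearCoeffs_X (i : ι) :
    linearCoeffs (X i : MvPolynomial ι R) = Finsupp.single i 1 := by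
  classical
  ext j
  simp [linearCoeffs_apply, coeff_X, Finsupp.single_apply, Finsupp.single_left_inj one_ne_zero]

theorem linearCoeffs_mul (p q : MvPolynomial ι R) :
    linearCoeffs (p * q) = constantCoeff q • linearCoeffs p + constantCoeff p • linearCoeffs q := by
  classical
  ext j
  simp [linearCoeffs_apply, coeff_mul, Finsupp.antidiagonal_single, Finset.Nat.antidiagonal_succ,
    ← constantCoeff_eq]
  ring

/-- The degree-one part of a polynomial, with `X i` read as `bΦ i`. -/
noncomputable def linearPart (bΦ : Module.Basis ι R Φ) : MvPolynomial ι R →ₗ[R] Φ :=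
  Finsupp.linearCombination R bΦ ∘ₗ linearCoeffs

theorem linearPart_X (bΦ : Module.Basis ι R Φ) (i : ι) : linearPart bΦ (X i) = bΦ i := by
  simp [linearPart, linearCoeffs_X]

theorem linearPart_mul (bΦ : Module.Basis ι R Φ) (p q : MvPolynomial ι R) :
    linearPart bΦ (p * q)
      = constantCoeff q • linearPart bΦ p + constantCoeff p • linearPart bΦ q := by
  simp [linearPart, linearCoeffs_mul]

section Basis
variable (bΦ : Module.Basis ι R Φ) {lin : Φ →ₗ[R] MvPolynomial ι R}

theorem adjoin_range_lin_eq_top (hlin : ∀ i, lin (bΦ i) = X i) :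
    Algebra.adjoin R (Set.range lin) = ⊤ :=
  top_unique <| adjoin_range_X (R := R) ▸
    Algebra.adjoin_mono (by rintro _ ⟨i, rfl⟩; exact ⟨bΦ i, hlin i⟩)

theorem linearPart_lin (hlin : ∀ i, lin (bΦ i) = X i) (φ : Φ) : linearPart bΦ (lin φ) = φ :=
  congr($(bΦ.ext (f₁ := linearPart bΦ ∘ₗ lin) (f₂ := .id) (by simp [hlin, linearPart_X])) φ)

theorem apply_lin_of_primitive_X (hlin : ∀ i, lin (bΦ i) = X i)
    {Δ : MvPolynomial ι R →ₐ[R] MvPolynomial ι R ⊗[R] MvPolynomial ι R}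
    (hΔ : ∀ i, Δ (X i) = X i ⊗ₜ 1 + 1 ⊗ₜ X i) (φ : Φ) :
    Δ (lin φ) = lin φ ⊗ₜ 1 + 1 ⊗ₜ lin φ := by
  have h := LinearMap.congr_fun (bΦ.ext (f₁ := Δ.toLinearMap ∘ₗ lin)
    (f₂ := (TensorProduct.mk R _ _).flip 1 ∘ₗ lin + TensorProduct.mk R _ _ 1 ∘ₗ lin)
    (by simp [hlin, hΔ])) φ
  simp only [LinearMap.add_apply, LinearMap.comp_apply, LinearMap.flip_apply,
    TensorProduct.mk_apply] at h
  exact h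

theorem apply_lin_of_apply_X_eq_zero (hlin : ∀ i, lin (bΦ i) = X i)
    {η : MvPolynomial ι R →ₐ[R] R} (hη : ∀ i, η (X i) = 0) (φ : Φ) : η (lin φ) = 0 :=
  congr($(bΦ.ext (f₁ := η.toLinearMap ∘ₗ lin) (f₂ := 0) (by simp [hlin, hη])) φ)

theorem exists_algHom_apply_lin_eq (hlin : ∀ i, lin (bΦ i) = X i) {A : Type*} [CommSemiring A]
    [Algebra R A] (ℓ : Φ →ₗ[R] A) : ∃ F : MvPolynomial ι R →ₐ[R] A, ∀ φ, F (lin φ) = ℓ φ :=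
  ⟨aeval (ℓ ∘ bΦ), fun φ => congr($(bΦ.ext (f₁ := (aeval (ℓ ∘ bΦ)).toLinearMap ∘ₗ lin) (f₂ := ℓ)
    (by simp [hlin])) φ)⟩

end Basis

end MvPolynomial

theorem symmetric_algebra_bicharacter (R S Φ ι : Type) [CommRing R] [CommRing S]
    [Algebra R S] [AddCommGroup Φ] [Module R Φ] (bΦ : Module.Basis ι R Φ)
    (lin : Φ →ₗ[R] MvPolynomial ι R) (hlin : ∀ i : ι, lin (bΦ i) = X i)
    (Δ : MvPolynomial ι R →ₐ[R] MvPolynomial ι R ⊗[R] MvPolynomial ι R)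
    (hΔ : ∀ i : ι, Δ (X i) = X i ⊗ₜ[R] (1 : MvPolynomial ι R)
      + (1 : MvPolynomial ι R) ⊗ₜ[R] X i)
    (η : MvPolynomial ι R →ₐ[R] R) (hη : ∀ i : ι, η (X i) = 0)
    (r : Φ →ₗ[R] Φ →ₗ[R] S) :
    ∃ ρ : MvPolynomial ι R →ₗ[R] MvPolynomial ι R →ₗ[R] S,
      IsBicharacter R (MvPolynomial ι R) S Δ.toLinearMap η.toLinearMap ρ ∧
      (∀ (m k : ℕ) (φ : Fin m → Φ) (ψ : Fin k → Φ), m ≠ k →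
        ρ (∏ i, lin (φ i)) (∏ j, lin (ψ j)) = 0) ∧
      (∀ (m : ℕ) (φ ψ : Fin m → Φ),
        ρ (∏ i, lin (φ i)) (∏ i, lin (ψ i))
          = ∑ σ : Equiv.Perm (Fin m), ∏ i, r (φ i) (ψ (σ i))) := by
  -- `MvPolynomial` already carries the monoid-algebra bialgebra structure (variables
  -- group-like); the local `Coalgebra` instance keeps instance search on the one given by `Δ`.
  let inst : Bialgebra R (MvPolynomial ι R) := .ofAlgHom Δ η (coassoc_of_comul_X hΔ)
    (map_counit_id_comp_of_comul_X hΔ hη) (map_id_counit_comp_of_comul_X hΔ hη)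
  let : Coalgebra R (MvPolynomial ι R) := inst.toCoalgebra
  have : IsCocomm R (MvPolynomial ι R) := ⟨congr(($(comm_comp_of_comul_X hΔ)).toLinearMap)⟩
  have hprim := apply_lin_of_primitive_X bΦ hlin hΔ
  have hε := apply_lin_of_apply_X_eq_zero bΦ hlin hη
  have hπ (a b : MvPolynomial ι R) :
      linearPart bΦ (a * b) = η b • linearPart bΦ a + η a • linearPart bΦ b := by
    simp only [algHom_apply_eq_constantCoeff hη, linearPart_mul]
  have hπlin := linearPart_lin bΦ hlin
  have hext (r' : Φ →ₗ[R] Φ →ₗ[R] S) := exists_algHom_apply_lin_eq bΦ hlin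
    ((WithConv.linearEquiv R _).symm.toLinearMap ∘ₗ r'.compl₂ (linearPart bΦ))
  obtain ⟨F, hF⟩ := hext r
  obtain ⟨G, hG⟩ := hext r.flip
  refine ⟨convPairing F,
    isBicharacter_convPairing lin (linearPart bΦ) r hprim hε hπ hπlin
      (adjoin_range_lin_eq_top bΦ hlin) F G hF hG,
    fun m k φ ψ hmk => ?_, fun m φ ψ => ?_⟩
  · exact algHom_prod_apply_prod_eq_zero lin (linearPart bΦ) r F hprim hε hπ hπlin hF φ
      Finset.univ ψ (by simpa)
  · exact algHom_prod_apply_prod_eq_permanent lin (linearPart bΦ) r F hprim hε hπ hπlin hF φ ψ
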